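/- Let E be a complete separable metric space, let ω : E × E → [0,∞] be lower semi-continuous, and let ξ = Σ_{i=1}^n δ_{a_i} and χ = Σ_{i=1}^k δ_{b_i} be configurations in M_ℕ(E) with n ≥ k ≥ 1. Then the partial transport cost satisfies T_{ω,0}(ξ, χ) = inf { Σ_{i=1}^k ω(x_i, y_i) : Σ_{i=1}^k δ_{x_i} ≤ ξ and χ = Σ_{i=1}^k δ_{y_i} }. -/

import Mathlib

open MeasureTheory ProbabilityTheory Filter Topology
open scoped ENNReal NNReal

noncomputable section

namespace PointProcess

variable {E : Type*} [MeasurableSpace E]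

open Classical in
/-- Relative entropy `H(μ | ν)`. -/
noncomputable def relEntropy (μ ν : Measure E) : ℝ≥0∞ :=
  if μ ≪ ν then ENNReal.ofReal (∫ x, Real.log (μ.rnDeriv ν x).toReal ∂μ) else ⊤

/-- `N` is a coupling of `μ` and `ν`. -/
def IsCoupling (N : Measure (E × E)) (μ ν : Measure E) : Prop :=
  N.map Prod.fst = μ ∧ N.map Prod.snd = ν

/-- Linear optimal transport cost `T_ω(ν | μ)` between measures of arbitrary mass. -/
noncomputable def transportCost (ω : E → E → ℝ≥0∞) (μ ν : Measure E) : ℝ≥0∞ :=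
  ⨅ (N : Measure (E × E)) (_ : IsCoupling N μ ν), ∫⁻ p, ω p.1 p.2 ∂N

/-- Generalized (weak) optimal transport cost `T_c(ν | μ)` associated with a cost
function `c : E × P(E) → [0,∞]`, using disintegration kernels. -/
noncomputable def genTransport (c : E → ProbabilityMeasure E → ℝ≥0∞) (μ ν : Measure E) : ℝ≥0∞ :=
  ⨅ (κ : Kernel E E) (h : IsMarkovKernel κ) (_ : μ.bind κ = ν),
    ∫⁻ x, c x ⟨κ x, h.isProbabilityMeasure x⟩ ∂μ

lemma mixture_isProbabilityMeasure (p q : ProbabilityMeasure E) (t : ℝ≥0) (ht : t ≤ 1) :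
    IsProbabilityMeasure
      ((t : ℝ≥0∞) • (p : Measure E) + ((1 - t : ℝ≥0) : ℝ≥0∞) • (q : Measure E)) := by
  constructor
  simp only [Measure.coe_add, Pi.add_apply, Measure.smul_apply, smul_eq_mul, measure_univ,
    mul_one]
  rw [← ENNReal.coe_add, add_tsub_cancel_of_le ht, ENNReal.coe_one]

/-- Convexity of a cost function in its second (measure) argument. -/
def ConvexInSecond (c : E → ProbabilityMeasure E → ℝ≥0∞) : Prop :=
  ∀ (x : E) (p q : ProbabilityMeasure E) (t : ℝ≥0) (ht : t ≤ 1),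
    c x ⟨(t : ℝ≥0∞) • (p : Measure E) + ((1 - t : ℝ≥0) : ℝ≥0∞) • (q : Measure E),
        mixture_isProbabilityMeasure p q t ht⟩
      ≤ (t : ℝ≥0∞) * c x p + ((1 - t : ℝ≥0) : ℝ≥0∞) * c x q

/-- A measure is a finite configuration: a finite sum of Dirac masses. -/
def IsFinConfig (μ : Measure E) : Prop :=
  ∃ (k : ℕ) (a : Fin k → E), μ = ∑ i, Measure.dirac (a i)

open Classical in
/-- Partial optimal transport cost `T_{ω,0}` between finite configurations. -/
noncomputable def partialTransport (ω : E → E → ℝ≥0∞) (ξ χ : Measure E) : ℝ≥0∞ :=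
  if χ Set.univ ≤ ξ Set.univ then
    ⨅ (ξ' : Measure E) (_ : ξ' ≤ ξ) (_ : IsFinConfig ξ') (_ : ξ' Set.univ = χ Set.univ),
      transportCost ω ξ' χ
  else
    ⨅ (χ' : Measure E) (_ : χ' ≤ χ) (_ : IsFinConfig χ') (_ : χ' Set.univ = ξ Set.univ),
      transportCost ω ξ χ'

/-- Law of the binomial point process of size `n` with sampling measure `μ`. -/
noncomputable def binomialLaw (μ : Measure E) [SigmaFinite μ] (n : ℕ) : Measure (Measure E) :=
  (Measure.pi (fun _ : Fin n => μ)).map (fun x => ∑ i, Measure.dirac (x i))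

/-- Law of the mixed binomial point process with sampling measure `μ` and size law `κ`. -/
noncomputable def mixedBinomialLaw (μ : Measure E) [SigmaFinite μ] (κ : Measure ℕ) :
    Measure (Measure E) :=
  κ.bind (fun n => binomialLaw μ n)

/-- `P` is the law of a Poisson point process with intensity measure `ν`: counts of disjoint
sets of finite measure are independent Poisson random variables with the corresponding means. -/
def IsPoissonPointProcess (ν : Measure E) (P : Measure (Measure E)) : Prop :=
  IsProbabilityMeasure P ∧
    ∀ (l : ℕ) (A : Fin l → Set E), (∀ i, MeasurableSet (A i)) →
      Pairwise (Function.onFun Disjoint A) → (∀ i, ν (A i) ≠ ∞) →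
      iIndepFun (fun i (η : Measure E) => η (A i)) P ∧
        ∀ i, P.map (fun η : Measure E => η (A i)) =
          (poissonMeasure (ν (A i)).toNNReal).map (fun k : ℕ => (k : ℝ≥0∞))

/-- The measure `ξ ∖ χ = Σ_x (ξ{x} - χ{x})₊ δ_x` (for configurations `ξ`). -/
noncomputable def pointDiff (ξ χ : Measure E) : Measure E :=
  ξ.withDensity (fun x => 1 - χ {x} / ξ {x})


/-- A measure whose restriction to every closed ball is a finite configuration. -/
def IsLocFinConfig {E : Type*} [MeasurableSpace E] [PseudoMetricSpace E] (μ : Measure E) : Prop :=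
  ∀ (x : E) (r : ℝ), IsFinConfig (μ.restrict (Metric.closedBall x r))


/-- `γ` satisfies the transport-entropy inequality `(T_c)` with constants `a₁, a₂`. -/
def TransportEntropy {E : Type*} [MeasurableSpace E] (c : E → ProbabilityMeasure E → ℝ≥0∞)
    (γ : Measure E) (a₁ a₂ : ℝ≥0∞) : Prop :=
  ∀ ν₁ ν₂ : Measure E, IsProbabilityMeasure ν₁ → IsProbabilityMeasure ν₂ →
    genTransport c ν₁ ν₂ ≤ a₁ * relEntropy ν₁ γ + a₂ * relEntropy ν₂ γ

/-- `γ` satisfies the transport-entropy inequality `(T_ω)` with constants `a₁, a₂`. -/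
def TransportEntropyLinear {E : Type*} [MeasurableSpace E] (ω : E → E → ℝ≥0∞)
    (γ : Measure E) (a₁ a₂ : ℝ≥0∞) : Prop :=
  ∀ ν₁ ν₂ : Measure E, IsProbabilityMeasure ν₁ → IsProbabilityMeasure ν₂ →
    transportCost ω ν₁ ν₂ ≤ a₁ * relEntropy ν₁ γ + a₂ * relEntropy ν₂ γ

/-!
A coupling `N` of `∑ δ_{x i}` and `∑ δ_{y j}` lives on the finite grid of atoms. Dividing
`N {(x i, y j)}` by the multiplicities of `x i` and `y j` gives a doubly stochastic matrix whose
pairing with `ω (x i) (y j)` is `∫ ω dN`. By Birkhoff's theorem this matrix is a convex combination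
of permutation matrices, so `∫ ω dN` is at least the cheapest assignment `∑ ω (x i) (y (σ i))`,
which the coupling `∑ δ_{(x i, y (σ i))}` attains. Hence the transport cost between two `k`-point
configurations is an assignment minimum, and the partial cost minimises it over the `k`-point
sub-configurations of `ξ`.
-/

lemma iInf_perm_le_sum_mul_of_sum_eq_one {n : Type*} [Fintype n] [DecidableEq n]
    (e c : n → n → ℝ≥0∞) (hrow : ∀ i, ∑ j, e i j = 1) (hcol : ∀ j, ∑ i, e i j = 1) :
    ⨅ σ : Equiv.Perm n, ∑ i, c i (σ i) ≤ ∑ i, ∑ j, e i j * c i j := by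
  have he : ∀ i j, e i j ≠ ∞ := fun i j =>
    ne_top_of_le_ne_top (by simp [hrow i]) (Finset.single_le_sum (fun j _ => zero_le)
      (Finset.mem_univ j))
  have hM : (fun i j => (e i j).toReal : Matrix n n ℝ) ∈ doublyStochastic ℝ n := by
    refine mem_doublyStochastic_iff_sum.2
      ⟨fun _ _ => ENNReal.toReal_nonneg, fun i => ?_, fun j => ?_⟩
    · rw [← ENNReal.toReal_sum fun j _ => he i j, hrow, ENNReal.toReal_one]
    · rw [← ENNReal.toReal_sum fun i _ => he i j, hcol, ENNReal.toReal_one]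
  obtain ⟨w, hw0, hw1, hwM⟩ := exists_eq_sum_perm_of_mem_doublyStochastic hM
  have he_eq : ∀ i j, e i j = ∑ σ : Equiv.Perm n, if σ i = j then ENNReal.ofReal (w σ) else 0 := by
    intro i j
    have hij := congrFun (congrFun hwM i) j
    simp only [Matrix.sum_apply, Matrix.smul_apply, Equiv.Perm.permMatrix, PEquiv.toMatrix_apply,
      Equiv.toPEquiv_apply, Option.mem_def, Option.some.injEq, smul_eq_mul, mul_ite, mul_one,
      mul_zero] at hij
    rw [← ENNReal.ofReal_toReal (he i j), ← hij,
      ENNReal.ofReal_sum_of_nonneg fun σ _ => by split_ifs <;> simp [hw0]]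
    simp only [apply_ite ENNReal.ofReal, ENNReal.ofReal_zero]
  calc ⨅ σ : Equiv.Perm n, ∑ i, c i (σ i)
      = ∑ σ : Equiv.Perm n, ENNReal.ofReal (w σ) * ⨅ τ : Equiv.Perm n, ∑ i, c i (τ i) := by
        rw [← Finset.sum_mul, ← ENNReal.ofReal_sum_of_nonneg fun σ _ => hw0 σ, hw1,
          ENNReal.ofReal_one, one_mul]
    _ ≤ ∑ σ : Equiv.Perm n, ENNReal.ofReal (w σ) * ∑ i, c i (σ i) :=
        Finset.sum_le_sum fun σ _ => mul_le_mul_right (iInf_le _ σ) _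
    _ = ∑ i, ∑ σ : Equiv.Perm n, ENNReal.ofReal (w σ) * c i (σ i) := by
        simp only [Finset.mul_sum]
        exact Finset.sum_comm
    _ = ∑ i, ∑ j, e i j * c i j := Finset.sum_congr rfl fun i _ => by
        simp only [he_eq, Finset.sum_mul, ite_mul, zero_mul]
        rw [Finset.sum_comm]
        simp

section Configurations

variable {ι : Type*} [Fintype ι]

lemma sum_dirac_apply_ne_top (c : ι → E) (s : Set E) : (∑ j, Measure.dirac (c j)) s ≠ ∞ :=
  ne_top_of_le_ne_top (by simp) (measure_mono (Set.subset_univ s))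

variable [MeasurableSingletonClass E]

lemma transportCost_sum_dirac_le (ω : E → E → ℝ≥0∞) (x y : ι → E) :
    transportCost ω (∑ i, Measure.dirac (x i)) (∑ i, Measure.dirac (y i))
      ≤ ∑ i, ω (x i) (y i) := by
  have hN : IsCoupling (∑ i, Measure.dirac (x i, y i))
      (∑ i, Measure.dirac (x i)) (∑ i, Measure.dirac (y i)) := by
    constructor
    · rw [Measure.map_finset_sum' measurable_fst.aemeasurable]
      simp [Measure.map_dirac' measurable_fst]
    · rw [Measure.map_finset_sum' measurable_snd.aemeasurable]
      simp [Measure.map_dirac' measurable_snd]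
  calc transportCost ω (∑ i, Measure.dirac (x i)) (∑ i, Measure.dirac (y i))
      ≤ ∫⁻ p, ω p.1 p.2 ∂(∑ i, Measure.dirac (x i, y i)) :=
        iInf₂_le (f := fun N (_ : IsCoupling N _ _) => ∫⁻ p, ω p.1 p.2 ∂N) _ hN
    _ = ∑ i, ω (x i) (y i) := by simp [lintegral_finsetSum_measure]

variable [DecidableEq E]

open Finset in
lemma sum_dirac_apply_singleton (c : ι → E) (s : E) :
    (∑ i, Measure.dirac (c i)) {s} = #{i | c i = s} := by
  simp [Measure.coe_finsetSum, Set.indicator_apply]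

lemma ae_mem_image_sum_dirac (c : ι → E) :
    ∀ᵐ s ∂(∑ i, Measure.dirac (c i)), s ∈ Finset.univ.image c := by
  simp [ae_iff, Measure.dirac_apply]

lemma sum_dirac_apply_self_ne_zero (c : ι → E) (i : ι) :
    (∑ j, Measure.dirac (c j)) {c i} ≠ 0 := by
  simp [sum_dirac_apply_singleton]

lemma sum_div_sum_dirac_apply_singleton (c : ι → E) (F : E → ℝ≥0∞) :
    ∑ i, F (c i) / (∑ j, Measure.dirac (c j)) {c i} = ∑ s ∈ Finset.univ.image c, F s := by
  rw [Finset.sum_comp (fun s => F s / (∑ j, Measure.dirac (c j)) {s}) c]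
  refine Finset.sum_congr rfl fun s hs => ?_
  obtain ⟨i, -, rfl⟩ := Finset.mem_image.1 hs
  rw [nsmul_eq_mul, ← sum_dirac_apply_singleton]
  exact ENNReal.mul_div_cancel (sum_dirac_apply_self_ne_zero c i) (sum_dirac_apply_ne_top c _)

variable {x y : ι → E} {N : Measure (E × E)}

lemma ae_mem_image_prod_of_isCoupling
    (hN : IsCoupling N (∑ i, Measure.dirac (x i)) (∑ i, Measure.dirac (y i))) :
    ∀ᵐ p ∂N, p ∈ Finset.univ.image x ×ˢ Finset.univ.image y := by
  have hx := ae_of_ae_map measurable_fst.aemeasurable (hN.1 ▸ ae_mem_image_sum_dirac x)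
  have hy := ae_of_ae_map measurable_snd.aemeasurable (hN.2 ▸ ae_mem_image_sum_dirac y)
  filter_upwards [hx, hy] with p hpx hpy
  exact Finset.mem_product.2 ⟨hpx, hpy⟩

lemma lintegral_eq_sum_of_isCoupling
    (hN : IsCoupling N (∑ i, Measure.dirac (x i)) (∑ i, Measure.dirac (y i)))
    (g : E × E → ℝ≥0∞) :
    ∫⁻ p, g p ∂N
      = ∑ s ∈ Finset.univ.image x, ∑ t ∈ Finset.univ.image y, g (s, t) * N {(s, t)} := by
  rw [← Finset.sum_product (f := fun p => g p * N {p}), ← lintegral_finset,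
    Measure.restrict_eq_self_of_ae_mem (ae_mem_image_prod_of_isCoupling hN)]

lemma sum_measure_singleton_of_isCoupling_fst
    (hN : IsCoupling N (∑ i, Measure.dirac (x i)) (∑ i, Measure.dirac (y i))) (i : ι) :
    ∑ t ∈ Finset.univ.image y, N {(x i, t)} = (∑ j, Measure.dirac (x j)) {x i} := by
  rw [← hN.1, Measure.map_apply measurable_fst (measurableSet_singleton _),
    ← lintegral_indicator_one (measurable_fst (measurableSet_singleton _)),
    lintegral_eq_sum_of_isCoupling hN, Finset.sum_comm]
  simp [Set.indicator]

lemma sum_measure_singleton_of_isCoupling_snd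
    (hN : IsCoupling N (∑ i, Measure.dirac (x i)) (∑ i, Measure.dirac (y i))) (j : ι) :
    ∑ s ∈ Finset.univ.image x, N {(s, y j)} = (∑ k, Measure.dirac (y k)) {y j} := by
  rw [← hN.2, Measure.map_apply measurable_snd (measurableSet_singleton _),
    ← lintegral_indicator_one (measurable_snd (measurableSet_singleton _)),
    lintegral_eq_sum_of_isCoupling hN]
  simp [Set.indicator]

variable (x y N) in
def couplingWeight (i j : ι) : ℝ≥0∞ :=
  N {(x i, y j)} / (∑ k, Measure.dirac (x k)) {x i} / (∑ k, Measure.dirac (y k)) {y j}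

lemma sum_couplingWeight_right
    (hN : IsCoupling N (∑ i, Measure.dirac (x i)) (∑ i, Measure.dirac (y i))) (i : ι) :
    ∑ j, couplingWeight x y N i j = 1 := by
  simp only [couplingWeight]
  rw [sum_div_sum_dirac_apply_singleton y (fun t => N {(x i, t)} / _)]
  simp only [div_eq_mul_inv]
  rw [← Finset.sum_mul, sum_measure_singleton_of_isCoupling_fst hN,
    ENNReal.mul_inv_cancel (sum_dirac_apply_self_ne_zero x i) (sum_dirac_apply_ne_top x _)]

lemma sum_couplingWeight_left
    (hN : IsCoupling N (∑ i, Measure.dirac (x i)) (∑ i, Measure.dirac (y i))) (j : ι) :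
    ∑ i, couplingWeight x y N i j = 1 := by
  simp only [couplingWeight, div_eq_mul_inv _ ((∑ k, Measure.dirac (y k)) {y j})]
  rw [← Finset.sum_mul, ← div_eq_mul_inv _ ((∑ k, Measure.dirac (y k)) {y j}),
    sum_div_sum_dirac_apply_singleton x (fun s => N {(s, y j)}),
    sum_measure_singleton_of_isCoupling_snd hN,
    ENNReal.div_self (sum_dirac_apply_self_ne_zero y j) (sum_dirac_apply_ne_top y _)]

lemma sum_couplingWeight_mul
    (hN : IsCoupling N (∑ i, Measure.dirac (x i)) (∑ i, Measure.dirac (y i)))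
    (g : E → E → ℝ≥0∞) :
    ∑ i, ∑ j, couplingWeight x y N i j * g (x i) (y j) = ∫⁻ p, g p.1 p.2 ∂N := by
  set ξ := ∑ k, Measure.dirac (x k)
  set χ := ∑ k, Measure.dirac (y k)
  calc ∑ i, ∑ j, couplingWeight x y N i j * g (x i) (y j)
      = ∑ i, (∑ j, g (x i) (y j) * N {(x i, y j)} / χ {y j}) / ξ {x i} := by
        simp only [couplingWeight, div_eq_mul_inv, Finset.sum_mul]
        exact Finset.sum_congr rfl fun i _ => Finset.sum_congr rfl fun j _ => by ring
    _ = ∑ i, (∑ t ∈ Finset.univ.image y, g (x i) t * N {(x i, t)}) / ξ {x i} :=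
        Finset.sum_congr rfl fun i _ => by
          rw [sum_div_sum_dirac_apply_singleton y (fun t => g (x i) t * N {(x i, t)})]
    _ = ∑ s ∈ Finset.univ.image x, ∑ t ∈ Finset.univ.image y, g s t * N {(s, t)} :=
        sum_div_sum_dirac_apply_singleton x
          (fun s => ∑ t ∈ Finset.univ.image y, g s t * N {(s, t)})
    _ = ∫⁻ p, g p.1 p.2 ∂N := (lintegral_eq_sum_of_isCoupling hN fun p => g p.1 p.2).symm

lemma iInf_perm_le_lintegral_of_isCoupling [DecidableEq ι] (ω : E → E → ℝ≥0∞)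
    (hN : IsCoupling N (∑ i, Measure.dirac (x i)) (∑ i, Measure.dirac (y i))) :
    ⨅ σ : Equiv.Perm ι, ∑ i, ω (x i) (y (σ i)) ≤ ∫⁻ p, ω p.1 p.2 ∂N := by
  rw [← sum_couplingWeight_mul hN]
  exact iInf_perm_le_sum_mul_of_sum_eq_one _ (fun i j => ω (x i) (y j))
    (sum_couplingWeight_right hN) (sum_couplingWeight_left hN)

end Configurations

theorem transportCost_sum_dirac_eq_iInf_perm [MeasurableSingletonClass E] {ι : Type*}
    [Fintype ι] [DecidableEq ι] (ω : E → E → ℝ≥0∞) (x y : ι → E) :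
    transportCost ω (∑ i, Measure.dirac (x i)) (∑ i, Measure.dirac (y i))
      = ⨅ σ : Equiv.Perm ι, ∑ i, ω (x i) (y (σ i)) := by
  classical
  refine le_antisymm (le_iInf fun σ => ?_)
    (le_iInf₂ fun N hN => iInf_perm_le_lintegral_of_isCoupling ω hN)
  rw [← Equiv.sum_comp σ fun i => Measure.dirac (y i)]
  exact transportCost_sum_dirac_le ω x (y ∘ σ)

theorem partialTransport_config_general
    {E : Type*} [MetricSpace E] [MeasurableSpace E] [BorelSpace E]
    (ω : E → E → ℝ≥0∞) (n k : ℕ) (hkn : k ≤ n) (a : Fin n → E) (b : Fin k → E) :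
    partialTransport ω (∑ i, Measure.dirac (a i)) (∑ i, Measure.dirac (b i))
      = ⨅ (x : Fin k → E) (y : Fin k → E)
          (_ : (∑ i, Measure.dirac (x i)) ≤ ∑ i, Measure.dirac (a i))
          (_ : (∑ i, Measure.dirac (b i)) = ∑ i, Measure.dirac (y i)),
          ∑ i, ω (x i) (y i) := by
  have hmass : (∑ i, Measure.dirac (b i)) Set.univ ≤ (∑ i, Measure.dirac (a i)) Set.univ := by
    simpa using hkn
  rw [partialTransport, if_pos hmass]
  refine le_antisymm (le_iInf₂ fun x y => le_iInf₂ fun hx hy => ?_)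
    (le_iInf₂ fun ξ' hξ' => le_iInf₂ fun ⟨m, x, hx⟩ hm => ?_)
  · refine iInf_le_of_le (∑ i, Measure.dirac (x i)) (iInf_le_of_le hx
      (iInf_le_of_le ⟨k, x, rfl⟩ (iInf_le_of_le (by simp) ?_)))
    rw [hy]
    exact transportCost_sum_dirac_le ω x y
  · subst hx
    obtain rfl : m = k := by simpa using hm
    rw [transportCost_sum_dirac_eq_iInf_perm]
    refine le_iInf fun σ => (iInf₂_le x (b ∘ σ)).trans (iInf₂_le hξ' ?_)
    exact (Equiv.sum_comp σ fun i => Measure.dirac (b i)).symm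

/-- Proposition 2.6: the partial transport cost between two configurations with
`n ≥ k ≥ 1` points equals the minimal cost of transporting a `k`-point sub-configuration of `ξ`
onto `χ`. -/
theorem partialTransport_config
    {E : Type*} [MetricSpace E] [CompleteSpace E] [TopologicalSpace.SeparableSpace E]
    [MeasurableSpace E] [BorelSpace E]
    (ω : E → E → ℝ≥0∞) (hω : LowerSemicontinuous (fun p : E × E => ω p.1 p.2))
    (n k : ℕ) (hk : 1 ≤ k) (hkn : k ≤ n) (a : Fin n → E) (b : Fin k → E) :
    partialTransport ω (∑ i, Measure.dirac (a i)) (∑ i, Measure.dirac (b i))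
      = ⨅ (x : Fin k → E) (y : Fin k → E)
          (_ : (∑ i, Measure.dirac (x i)) ≤ ∑ i, Measure.dirac (a i))
          (_ : (∑ i, Measure.dirac (b i)) = ∑ i, Measure.dirac (y i)),
          ∑ i, ω (x i) (y i) :=
  partialTransport_config_general ω n k hkn a b

end PointProcess
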